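/- If the group G is finite, then the Banach algebra A_Φ(G)** equipped with the first Arens product is semi-simple. -/

import Mathlib

open MeasureTheory Filter Topology NormedSpace
open scoped ENNReal ZeroAtInfty

noncomputable section

/-! ### Young functions and the Δ₂ and MA conditions -/

/-- A (real-valued, continuous) Young function. -/
structure IsYoungFunction (Φ : ℝ → ℝ) : Prop where
  even : ∀ x, Φ (-x) = Φ x
  convexOn : ConvexOn ℝ Set.univ Φ
  nonneg : ∀ x, 0 ≤ Φ x
  map_zero : Φ 0 = 0
  continuous : Continuous Φ
  tendsto_atTop : Tendsto Φ atTop atTop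

/-- `(Φ, Ψ)` is a complementary pair of Young functions:
`Ψ y = sup { x * |y| - Φ x : x ≥ 0 }`. -/
def IsComplementaryYoungPair (Φ Ψ : ℝ → ℝ) : Prop :=
  IsYoungFunction Φ ∧ IsYoungFunction Ψ ∧
    ∀ y, Ψ y = sSup {z | ∃ x ≥ (0 : ℝ), z = x * |y| - Φ x}

/-- The Δ₂-condition for a Young function. -/
def HasDeltaTwo (Φ : ℝ → ℝ) : Prop :=
  ∃ k > (0 : ℝ), ∃ x₀ ≥ (0 : ℝ), ∀ x ≥ x₀, Φ (2 * x) ≤ k * Φ x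

/-- The Milnes–Akimonič (MA) condition for a Young function. -/
def HasMACondition (Φ : ℝ → ℝ) : Prop :=
  ∀ ε > (0 : ℝ), ∃ β > (1 : ℝ), ∃ x₀ ≥ (0 : ℝ), ∀ x ≥ x₀,
    β * deriv Φ x ≤ deriv Φ ((1 + ε) * x)

/-! ### Orlicz spaces -/

section Orlicz

variable {G : Type*} [MeasurableSpace G]

/-- Membership in the Orlicz space `L^Φ(G)`. -/
def MemOrlicz (Φ : ℝ → ℝ) (μ : Measure G) (f : G → ℂ) : Prop :=
  AEStronglyMeasurable f μ ∧ ∃ β > (0 : ℝ), ∫⁻ x, ENNReal.ofReal (Φ (β * ‖f x‖)) ∂μ < ⊤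

/-- The Luxemburg (gauge) norm `N_Φ(f)` on `L^Φ(G)`. -/
def luxemburgNorm (Φ : ℝ → ℝ) (μ : Measure G) (f : G → ℂ) : ℝ :=
  sInf {k | 0 < k ∧ ∫⁻ x, ENNReal.ofReal (Φ (‖f x‖ / k)) ∂μ ≤ 1}

/-- The Orlicz norm `‖f‖_Φ`, where `Ψ` is the Young function complementary to `Φ`. -/
def orliczNorm (Φ Ψ : ℝ → ℝ) (μ : Measure G) (f : G → ℂ) : ℝ :=
  sSup {r | ∃ g : G → ℂ, (∫⁻ x, ENNReal.ofReal (Ψ (‖g x‖)) ∂μ ≤ 1) ∧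
    r = ∫ x, ‖f x‖ * ‖g x‖ ∂μ}

end Orlicz

/-! ### The Orlicz Figà-Talamanca Herz algebra `A_Φ(G)` -/

section Aphi

variable {G : Type*} [MeasurableSpace G] [Group G] [TopologicalSpace G]

/-- `f, g` give an admissible representation `u = ∑' n, f n ⋆ (g n)ᵛ` of `u` for `A_Φ(G)`,
where `ǧ x = g x⁻¹`, so that `(f ⋆ ǧ) x = ∫ y, f y * g (x⁻¹ * y)`. -/
def IsAphiDecomposition (μ : Measure G) (Φ Ψ : ℝ → ℝ) (u : G → ℂ)
    (f g : ℕ → G → ℂ) : Prop :=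
  (∀ n, MemOrlicz Φ μ (f n)) ∧ (∀ n, MemOrlicz Ψ μ (g n)) ∧
    Summable (fun n => luxemburgNorm Φ μ (f n) * orliczNorm Ψ Φ μ (g n)) ∧
    ∀ x, u x = ∑' n, ∫ y, f n y * g n (x⁻¹ * y) ∂μ

/-- Membership in `A_Φ(G)` for an element of `C₀(G, ℂ)`. -/
def MemAphi (μ : Measure G) (Φ Ψ : ℝ → ℝ) (u : C₀(G, ℂ)) : Prop :=
  ∃ f g, IsAphiDecomposition μ Φ Ψ (⇑u) f g

/-- The norm of `A_Φ(G)`. -/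
def aphiNorm (μ : Measure G) (Φ Ψ : ℝ → ℝ) (u : C₀(G, ℂ)) : ℝ :=
  sInf {r | ∃ f g, IsAphiDecomposition μ Φ Ψ (⇑u) f g ∧
    r = ∑' n, luxemburgNorm Φ μ (f n) * orliczNorm Ψ Φ μ (g n)}

/-- `A`, together with the embedding `ι : A → C₀(G, ℂ)`, *is* the Orlicz
Figà-Talamanca Herz algebra `A_Φ(G)`: a commutative Banach algebra of
`C₀`-functions (with pointwise operations) whose members are exactly the functions
admitting an `A_Φ`-decomposition, and carrying the `A_Φ(G)`-norm. -/
structure IsOrliczFigaTalamancaHerzAlgebra (μ : Measure G) (Φ Ψ : ℝ → ℝ)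
    (A : Type*) [NonUnitalNormedCommRing A] [NormedSpace ℂ A]
    (ι : A → C₀(G, ℂ)) : Prop where
  injective : Function.Injective ι
  map_add : ∀ a b, ι (a + b) = ι a + ι b
  map_smul : ∀ (c : ℂ) (a), ι (c • a) = c • ι a
  map_mul : ∀ a b, ι (a * b) = ι a * ι b
  mem_range_iff : ∀ u, (∃ a, ι a = u) ↔ MemAphi μ Φ Ψ u
  norm_eq : ∀ a, ‖a‖ = aphiNorm μ Φ Ψ (ι a)

end Aphi

/-! ### The first Arens product on the double dual of a Banach algebra -/

section Arens

variable (A : Type*) [NonUnitalNormedRing A] [NormedSpace ℂ A]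
  [SMulCommClass ℂ A A] [IsScalarTower ℂ A A]

open ContinuousLinearMap in
/-- The module action `u • T` of `A` on its dual: `⟨u • T, v⟩ = ⟨T, u * v⟩`. -/
def dotAct (u : A) (T : StrongDual ℂ A) : StrongDual ℂ A :=
  T.comp (ContinuousLinearMap.mul ℂ A u)

open ContinuousLinearMap in
/-- The action `dotAct` as a continuous bilinear map, `(T, u) ↦ u • T`. -/
def dotActR : StrongDual ℂ A →L[ℂ] A →L[ℂ] StrongDual ℂ A :=
  ((compL ℂ A (A →L[ℂ] A) (StrongDual ℂ A)).flip (ContinuousLinearMap.mul ℂ A)).comp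
    (compL ℂ A A ℂ)

open ContinuousLinearMap in
/-- The operation `Γ ⊙ T` on `A** × A*`: `⟨Γ ⊙ T, u⟩ = ⟨Γ, u • T⟩`. -/
def arensOdot : StrongDual ℂ (StrongDual ℂ A) →L[ℂ] StrongDual ℂ A →L[ℂ] StrongDual ℂ A :=
  letI : SeminormedAddCommGroup (StrongDual ℂ A →L[ℂ] A →L[ℂ] StrongDual ℂ A) :=
    ContinuousLinearMap.toSeminormedAddCommGroup (𝕜 := ℂ) (𝕜₂ := ℂ) (σ₁₂ := RingHom.id ℂ)
      (E := StrongDual ℂ A) (F := A →L[ℂ] StrongDual ℂ A)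
  letI : NormedSpace ℂ (StrongDual ℂ A →L[ℂ] A →L[ℂ] StrongDual ℂ A) :=
    ContinuousLinearMap.toNormedSpace (𝕜 := ℂ) (𝕜₂ := ℂ) (σ₁₂ := RingHom.id ℂ)
      (E := StrongDual ℂ A) (F := A →L[ℂ] StrongDual ℂ A) (𝕜' := ℂ)
  ((compL ℂ (StrongDual ℂ A) (A →L[ℂ] StrongDual ℂ A) (StrongDual ℂ A)).flip (dotActR A)).comp
    (compL ℂ A (StrongDual ℂ A) ℂ)

/-- The first Arens product `Γ' □ Γ` on the double dual `A**`:
`⟨Γ' □ Γ, T⟩ = ⟨Γ', Γ ⊙ T⟩`. -/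
def arens (Γ' Γ : StrongDual ℂ (StrongDual ℂ A)) : StrongDual ℂ (StrongDual ℂ A) :=
  Γ'.comp (arensOdot A Γ)

/-- The space `UCB_Ψ(Ĝ) = A* ⬝ A`: the norm closure in `A*` of the linear span of
`{u • T : u ∈ A, T ∈ A*}`. -/
def UCBSubmodule : Submodule ℂ (StrongDual ℂ A) :=
  (Submodule.span ℂ {T | ∃ (u : A) (S : StrongDual ℂ A), T = dotAct A u S}).topologicalClosure

variable {A} in
theorem dotAct_mem_UCBSubmodule (u : A) (S : StrongDual ℂ A) :
    dotAct A u S ∈ UCBSubmodule A :=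
  Submodule.le_topologicalClosure _ (Submodule.subset_span ⟨u, S, rfl⟩)

variable {A} in
/-- The restriction of `Γ ∈ A**` to the subspace `UCB_Ψ(Ĝ) ⊆ A*`. -/
def restrictToUCB (Γ : StrongDual ℂ (StrongDual ℂ A)) : StrongDual ℂ ↥(UCBSubmodule A) :=
  Γ.comp (UCBSubmodule A).subtypeL

end Arens

/-! ### Dual maps, supports, radicals, topological centres, amenability -/

/-- The adjoint (dual map) of a continuous linear map. -/
def dualMapL {E F : Type*} [NormedAddCommGroup E] [NormedSpace ℂ E]
    [NormedAddCommGroup F] [NormedSpace ℂ F] (m : E →L[ℂ] F) :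
    StrongDual ℂ F →L[ℂ] StrongDual ℂ E :=
  (ContinuousLinearMap.compL ℂ E F ℂ).flip m

section Support

variable {G : Type*} [TopologicalSpace G] {A : Type*} [NonUnitalNormedCommRing A]
  [NormedSpace ℂ A]

/-- The support of a functional `T ∈ A* = PM_Ψ(G)`: `x ∉ supp T` iff there is a
neighbourhood `V` of `x` such that `⟨T, v⟩ = 0` for all `v ∈ A` supported in `V`. -/
def pmSupport (ι : A → C₀(G, ℂ)) (T : StrongDual ℂ A) : Set G :=
  {x | ∀ V ∈ nhds x, ∃ a : A, tsupport ⇑(ι a) ⊆ V ∧ T a ≠ 0}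

end Support

/-- `z` is left quasi-regular with respect to the multiplication `mul`:
there is `b` with `b + z + b * z = 0` (i.e. `1 + z` has a left inverse `1 + b`
in the unitization). -/
def IsLeftQuasiRegularWith {R : Type*} [AddCommGroup R] (mul : R → R → R) (z : R) : Prop :=
  ∃ b, b + z + mul b z = 0

/-- Membership in the Jacobson radical of the (possibly non-unital) ring `(R, +, mul)`:
every element of the right ideal generated by `a` is left quasi-regular. -/
def MemJacobsonRadicalWith {R : Type*} [AddCommGroup R] (mul : R → R → R) (a : R) : Prop :=
  ∀ (x : R) (n : ℤ), IsLeftQuasiRegularWith mul (mul a x + n • a)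

/-- The (possibly non-unital) ring `(R, +, mul)` is semi-simple: its Jacobson radical
is `{0}`. -/
def IsSemisimpleWith {R : Type*} [AddCommGroup R] (mul : R → R → R) : Prop :=
  ∀ a, MemJacobsonRadicalWith mul a → a = 0

/-- The topological centre of the dual of `E` with respect to a product `mul` on the
dual: the set of all `m` such that `m' ↦ mul m m'` is `w*`-`w*`-continuous. -/
def topCenterWith {E : Type*} [NormedAddCommGroup E] [NormedSpace ℂ E]
    (mul : StrongDual ℂ E → StrongDual ℂ E → StrongDual ℂ E) : Set (StrongDual ℂ E) :=
  {m | Continuous fun m' : WeakDual ℂ E =>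
    StrongDual.toWeakDual (mul m (WeakDual.toStrongDual m'))}

section Amenable

variable {G : Type*} [MeasurableSpace G] [Group G]

/-- Amenability of `G`: there is a positive, norm-one, left translation invariant
linear functional on `L^∞(G)`. -/
def HasLeftInvariantMean (μ : Measure G) : Prop :=
  ∃ Λ : Lp ℝ ⊤ μ →L[ℝ] ℝ, ‖Λ‖ = 1 ∧
    (∀ f : Lp ℝ ⊤ μ, (∀ᵐ y ∂μ, 0 ≤ f y) → 0 ≤ Λ f) ∧
    ∀ (x : G) (f g : Lp ℝ ⊤ μ), (∀ᵐ y ∂μ, g y = f (x⁻¹ * y)) → Λ g = Λ f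

end Amenable

/-- A normed space is weakly sequentially complete if every weakly Cauchy sequence
converges weakly. -/
def WeaklySequentiallyComplete (E : Type*) [NormedAddCommGroup E] [NormedSpace ℂ E] : Prop :=
  ∀ u : ℕ → E, (∀ T : StrongDual ℂ E, CauchySeq fun n => T (u n)) →
    ∃ x : E, ∀ T : StrongDual ℂ E, Tendsto (fun n => T (u n)) atTop (nhds (T x))

section PF

variable {G : Type*} [MeasurableSpace G] [Group G] [TopologicalSpace G]

/-- The algebra of `Ψ`-pseudofunctions `PF_Ψ(G)`, realised inside `A_Φ(G)* = PM_Ψ(G)`: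
the norm closure of the span of the functionals induced by `L¹(G)`-functions. -/
def PFSubmodule (μ : Measure G) {A : Type*} [NonUnitalNormedCommRing A]
    [NormedSpace ℂ A] (ι : A → C₀(G, ℂ)) : Submodule ℂ (StrongDual ℂ A) :=
  (Submodule.span ℂ {T | ∃ f : G → ℂ, Integrable f μ ∧
    ∀ a, T a = ∫ x, f x * ι a x ∂μ}).topologicalClosure

end PF


/-! ### Standing hypotheses -/

variable {G : Type*} [Group G] [TopologicalSpace G] [IsTopologicalGroup G]
  [LocallyCompactSpace G] [MeasurableSpace G] [BorelSpace G]

/-!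
For finite `G`, `A_Φ(G)` embeds as an algebra into `ℂ^G`, so it is finite-dimensional and the
point evaluations are characters separating its points. A character `χ` of `A` induces the
functional `Γ ↦ Γ χ` on `A**`, which is again a character for the first Arens product since
`u · χ = χ u • χ`. Characters vanish on the Jacobson radical, and in finite dimension every
element of `A**` is evaluation at a point of `A`; so a radical element of `A**` is evaluation at
a point where all the separating characters vanish, i.e. at `0`.
-/

section Radical

variable {R : Type*} [AddCommGroup R] {mul : R → R → R}

theorem IsLeftQuasiRegularWith.apply_ne_neg_one {𝕜 : Type*} [CommRing 𝕜] [Nontrivial 𝕜]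
    (φ : R →+ 𝕜) (hφ : ∀ a b, φ (mul a b) = φ a * φ b) {z : R}
    (hz : IsLeftQuasiRegularWith mul z) : φ z ≠ -1 := by
  obtain ⟨b, hb⟩ := hz
  intro h
  have hφb := congrArg φ hb
  rw [map_add, map_add, hφ, h, map_zero] at hφb
  have : (-1 : 𝕜) = 0 := by linear_combination hφb
  exact one_ne_zero (neg_eq_zero.mp this)

theorem MemJacobsonRadicalWith.apply_eq_zero {𝕜 : Type*} [Field 𝕜] [Module 𝕜 R]
    (φ : R →ₗ[𝕜] 𝕜) (hφ : ∀ a b, φ (mul a b) = φ a * φ b) {a : R}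
    (ha : MemJacobsonRadicalWith mul a) : φ a = 0 := by
  by_contra h
  -- `x := -(φ a)⁻² • a` gives `φ (mul a x) = -1`.
  refine (ha (-(φ a * φ a)⁻¹ • a) 0).apply_ne_neg_one φ.toAddMonoidHom hφ ?_
  simp only [zero_smul, add_zero, LinearMap.toAddMonoidHom_coe, hφ, map_smul, smul_eq_mul]
  field_simp

end Radical

section Arens

variable {A : Type*} [NonUnitalNormedRing A] [NormedSpace ℂ A]
  [SMulCommClass ℂ A A] [IsScalarTower ℂ A A] {χ : StrongDual ℂ A}

theorem dotAct_eq_smul_of_map_mul (hχ : ∀ a b, χ (a * b) = χ a * χ b) (u : A) :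
    dotAct A u χ = χ u • χ := by
  ext v
  exact hχ u v

theorem arensOdot_apply_of_map_mul (hχ : ∀ a b, χ (a * b) = χ a * χ b)
    (Γ : StrongDual ℂ (StrongDual ℂ A)) : arensOdot A Γ χ = Γ χ • χ := by
  ext u
  change Γ (dotAct A u χ) = Γ χ * χ u
  rw [dotAct_eq_smul_of_map_mul hχ, map_smul, smul_eq_mul, mul_comm]

theorem arens_apply_of_map_mul (hχ : ∀ a b, χ (a * b) = χ a * χ b)
    (Γ' Γ : StrongDual ℂ (StrongDual ℂ A)) : arens A Γ' Γ χ = Γ' χ * Γ χ := by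
  change Γ' (arensOdot A Γ χ) = _
  rw [arensOdot_apply_of_map_mul hχ, map_smul, smul_eq_mul, mul_comm]

end Arens

section DoubleDual

variable {𝕜 E : Type*} [NontriviallyNormedField 𝕜] [CompleteSpace 𝕜]
  [NormedAddCommGroup E] [NormedSpace 𝕜 E] [FiniteDimensional 𝕜 E]

theorem NormedSpace.inclusionInDoubleDual_surjective :
    Function.Surjective (NormedSpace.inclusionInDoubleDual 𝕜 E) :=
  (LinearMap.IsContPerfPair.bijective_right (topDualPairing 𝕜 E)).surjective

theorem StrongDual.bidual_eq_zero_of_separatesPoints {X : Type*} (χ : X → StrongDual 𝕜 E)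
    (hχ : ∀ a, (∀ x, χ x a = 0) → a = 0) (Γ : StrongDual 𝕜 (StrongDual 𝕜 E))
    (hΓ : ∀ x, Γ (χ x) = 0) : Γ = 0 := by
  obtain ⟨a, rfl⟩ := NormedSpace.inclusionInDoubleDual_surjective Γ
  rw [hχ a hΓ, map_zero]

end DoubleDual

section Semisimple

variable {A : Type*} [NonUnitalNormedRing A] [NormedSpace ℂ A]
  [SMulCommClass ℂ A A] [IsScalarTower ℂ A A]

theorem isSemisimpleWith_arens_of_separating_characters [FiniteDimensional ℂ A] {X : Type*}
    (χ : X → StrongDual ℂ A) (hmul : ∀ x a b, χ x (a * b) = χ x a * χ x b)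
    (hsep : ∀ a, (∀ x, χ x a = 0) → a = 0) : IsSemisimpleWith (arens A) := fun Γ hΓ =>
  StrongDual.bidual_eq_zero_of_separatesPoints χ hsep Γ fun x =>
    hΓ.apply_eq_zero (ContinuousLinearMap.apply ℂ ℂ (χ x)).toLinearMap
      (arens_apply_of_map_mul (hmul x))

theorem isSemisimpleWith_arens_of_injective_pi {X : Type*} [Finite X]
    (ψ : A →ₙₐ[ℂ] (X → ℂ)) (hψ : Function.Injective ψ) : IsSemisimpleWith (arens A) := by
  have : FiniteDimensional ℂ A := .of_injective (ψ : A →ₗ[ℂ] X → ℂ) hψ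
  let χ (x : X) : StrongDual ℂ A :=
    LinearMap.toContinuousLinearMap (LinearMap.proj x ∘ₗ (ψ : A →ₗ[ℂ] X → ℂ))
  refine isSemisimpleWith_arens_of_separating_characters χ (fun x a b => ?_)
    (fun a ha => hψ ?_)
  · change ψ (a * b) x = ψ a x * ψ b x
    rw [map_mul, Pi.mul_apply]
  · ext x
    rw [map_zero]
    exact ha x

end Semisimple

namespace IsOrliczFigaTalamancaHerzAlgebra

variable {G : Type*} [MeasurableSpace G] [Group G] [TopologicalSpace G] {μ : Measure G}
  {Φ Ψ : ℝ → ℝ} {A : Type*} [NonUnitalNormedCommRing A] [NormedSpace ℂ A]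
  {ι : A → C₀(G, ℂ)}

def toPi (hA : IsOrliczFigaTalamancaHerzAlgebra μ Φ Ψ A ι) : A →ₙₐ[ℂ] (G → ℂ) where
  toFun a := ι a
  map_smul' c a := by ext; simp [hA.map_smul]
  map_zero' := by simpa using congrArg (⇑) (hA.map_smul 0 0)
  map_add' a b := by ext; simp [hA.map_add]
  map_mul' a b := by ext; simp [hA.map_mul]

theorem toPi_injective (hA : IsOrliczFigaTalamancaHerzAlgebra μ Φ Ψ A ι) :
    Function.Injective hA.toPi := fun _ _ h => hA.injective (DFunLike.coe_injective h)

end IsOrliczFigaTalamancaHerzAlgebra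

theorem aphi_bidual_semisimple_of_finite_general [Finite G]
    (μ : Measure G) (Φ Ψ : ℝ → ℝ)
    (A : Type*) [NonUnitalNormedCommRing A] [NormedSpace ℂ A] [SMulCommClass ℂ A A]
    [IsScalarTower ℂ A A] (ι : A → C₀(G, ℂ))
    (hA : IsOrliczFigaTalamancaHerzAlgebra μ Φ Ψ A ι) :
    IsSemisimpleWith (arens A) :=
  isSemisimpleWith_arens_of_injective_pi hA.toPi hA.toPi_injective

/-- If the group `G` is finite, then the Banach algebra `A_Φ(G)**`
(first Arens product) is semi-simple. -/
theorem aphi_bidual_semisimple_of_finite [Finite G]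
    (μ : Measure G) [μ.IsHaarMeasure] (Φ Ψ : ℝ → ℝ)
    (hpair : IsComplementaryYoungPair Φ Ψ) (hΦΔ : HasDeltaTwo Φ) (hΨΔ : HasDeltaTwo Ψ)
    (A : Type*) [NonUnitalNormedCommRing A] [NormedSpace ℂ A] [SMulCommClass ℂ A A]
    [IsScalarTower ℂ A A] [CompleteSpace A] (ι : A → C₀(G, ℂ))
    (hA : IsOrliczFigaTalamancaHerzAlgebra μ Φ Ψ A ι) :
    IsSemisimpleWith (arens A) :=
  aphi_bidual_semisimple_of_finite_general μ Φ Ψ A ι hA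

end
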